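/- Let s ∈ (3/4,1), u ∈ H^s(ℝ³), and let φ ∈ D^{s,2}(ℝ³) be a weak solution of (−Δ)^s φ = u², i.e. E_s(φ,v) = ∫_{ℝ³} u² v dx for all v ∈ D^{s,2}(ℝ³). Then ∫_{ℝ³} |u(x)|³ dx ≤ E_s(u,u) + (1/4) E_s(φ,φ). -/

import Mathlib

/-!
Test the weak equation with the truncations `v_k = min |u| k`. Being bounded and in `L²`, `v_k`
lies in `L^{2_s^*}`, and being a 1-Lipschitz function of `u`, it has finite Gagliardo energy, so
`v_k ∈ D^{s,2}`. Young's inequality `ab ≤ a²/4 + b²` inside the double integral gives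
`∫ u² v_k = E_s(φ, v_k) ≤ E_s(u, u) + E_s(φ, φ)/4`, and dominated convergence as `k → ∞`
turns the left side into `∫ |u|³`.
-/

open MeasureTheory Real Filter

noncomputable section

abbrev R3 := EuclideanSpace ℝ (Fin 3)

/-- The standard normalizing constant `C(3,s)` of the fractional Laplacian. -/
def fracC (s : ℝ) : ℝ :=
  (∫ z : R3, (1 - Real.cos (z 0)) / ‖z‖ ^ (3 + 2 * s))⁻¹

/-- The Gagliardo bilinear energy `E_s(u,v)`. -/
def Es (s : ℝ) (u v : R3 → ℝ) : ℝ :=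
  (fracC s / 2) *
    ∫ q : R3 × R3, (u q.1 - u q.2) * (v q.1 - v q.2) / ‖q.1 - q.2‖ ^ (3 + 2 * s)

/-- Finiteness of the Gagliardo seminorm. -/
def GagliardoFinite (s : ℝ) (u : R3 → ℝ) : Prop :=
  Integrable (fun q : R3 × R3 => (u q.1 - u q.2) ^ 2 / ‖q.1 - q.2‖ ^ (3 + 2 * s))

/-- Membership in the fractional Sobolev space `H^s(ℝ³)`. -/
def MemHs (s : ℝ) (u : R3 → ℝ) : Prop :=
  MemLp u 2 volume ∧ GagliardoFinite s u

/-- The `H^s(ℝ³)` norm. -/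
def HsNorm (s : ℝ) (u : R3 → ℝ) : ℝ :=
  Real.sqrt ((∫ x, u x ^ 2) + Es s u u)

/-- The constant `c_s` of the Riesz potential. -/
def rieszC (s : ℝ) : ℝ :=
  Real.pi ^ (-(3:ℝ)/2) * (2:ℝ) ^ (-(2*s)) * Real.Gamma (3 - 2*s) / Real.Gamma s

/-- The Riesz potential `φ_u` solving `(-Δ)^s φ = u²`. -/
def phiu (s : ℝ) (u : R3 → ℝ) (x : R3) : ℝ :=
  rieszC s * ∫ y, u y ^ 2 / ‖x - y‖ ^ (3 - 2*s)

/-- Membership in the homogeneous space `D^{s,2}(ℝ³)`. -/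
def MemDs2 (s : ℝ) (φ : R3 → ℝ) : Prop :=
  MemLp φ (ENNReal.ofReal (6/(3-2*s))) volume ∧ GagliardoFinite s φ

open scoped ENNReal

theorem MeasureTheory.MemLp.of_exponent_le_of_ae_norm_le {α E : Type*} [MeasurableSpace α]
    {μ : Measure α} [NormedAddCommGroup E] {f : α → E} {p q : ℝ≥0∞} (hf : MemLp f q μ)
    {k : ℝ} (hbd : ∀ᵐ x ∂μ, ‖f x‖ ≤ k) (hq : q ≠ 0) (hqp : q ≤ p) (hp : p ≠ ∞) :
    MemLp f p μ := by
  have hq_top : q ≠ ∞ := ne_top_of_le_ne_top hp hqp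
  have hpq : q.toReal ≤ p.toReal := ENNReal.toReal_mono hp hqp
  rw [← integrable_norm_rpow_iff hf.1 (ne_bot_of_le_ne_bot hq hqp) hp]
  refine ((hf.integrable_norm_rpow hq hq_top).const_mul (k ^ (p.toReal - q.toReal))).mono'
    (hf.1.norm.aemeasurable.pow_const _).aestronglyMeasurable ?_
  filter_upwards [hbd] with x hx
  rw [Real.norm_of_nonneg (by positivity)]
  calc ‖f x‖ ^ p.toReal = ‖f x‖ ^ (p.toReal - q.toReal) * ‖f x‖ ^ q.toReal := by
        rw [← Real.rpow_add_of_nonneg (norm_nonneg _) (by linarith) ENNReal.toReal_nonneg]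
        ring_nf
    _ ≤ k ^ (p.toReal - q.toReal) * ‖f x‖ ^ q.toReal := by
        gcongr

theorem sq_min_abs_sub_min_abs_le (a b k : ℝ) : (min |a| k - min |b| k) ^ 2 ≤ (a - b) ^ 2 := by
  rw [sq_le_sq]
  refine (abs_min_sub_min_le_max _ _ _ _).trans ?_
  simpa using abs_abs_sub_abs_le_abs_sub a b

section Energy

variable {s : ℝ}

theorem fracC_nonneg : 0 ≤ fracC s :=
  inv_nonneg.2 <| integral_nonneg fun z => by
    have := Real.cos_le_one (z 0)
    exact div_nonneg (by linarith) (by positivity)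

theorem Es_self (w : R3 → ℝ) :
    Es s w w = fracC s / 2 * ∫ q : R3 × R3, (w q.1 - w q.2) ^ 2 / ‖q.1 - q.2‖ ^ (3 + 2 * s) := by
  simp only [Es, sq]

theorem Es_self_nonneg (w : R3 → ℝ) : 0 ≤ Es s w w := by
  rw [Es_self]
  exact mul_nonneg (div_nonneg fracC_nonneg zero_le_two) (integral_nonneg fun q => by positivity)

theorem GagliardoFinite.of_sq_sub_le {u v : R3 → ℝ} (hu : GagliardoFinite s u)
    (hv : AEStronglyMeasurable v) (hvu : ∀ x y, (v x - v y) ^ 2 ≤ (u x - u y) ^ 2) :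
    GagliardoFinite s v := by
  refine Integrable.mono hu ?_ (Eventually.of_forall fun q => ?_)
  · have hdiff : AEStronglyMeasurable (fun q : R3 × R3 => v q.1 - v q.2) :=
      hv.comp_fst.sub hv.comp_snd
    exact (hdiff.aemeasurable.pow_const 2).div
      ((measurable_fst.sub measurable_snd).norm.pow_const _).aemeasurable |>.aestronglyMeasurable
  · simp only [Real.norm_eq_abs]
    rw [abs_of_nonneg (by positivity), abs_of_nonneg (by positivity)]
    exact div_le_div_of_nonneg_right (hvu q.1 q.2) (by positivity)

theorem Es_le_of_sq_sub_le {φ u v : R3 → ℝ} (hφ : GagliardoFinite s φ)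
    (hu : GagliardoFinite s u) (hvu : ∀ x y, (v x - v y) ^ 2 ≤ (u x - u y) ^ 2) :
    Es s φ v ≤ Es s u u + 1 / 4 * Es s φ φ := by
  set K : R3 × R3 → ℝ := fun q => ‖q.1 - q.2‖ ^ (3 + 2 * s)
  set G : R3 × R3 → ℝ := fun q =>
    1 / 4 * ((φ q.1 - φ q.2) ^ 2 / K q) + (u q.1 - u q.2) ^ 2 / K q
  have hG : Integrable G := (hφ.const_mul _).add hu
  have hyoung : ∀ q, (φ q.1 - φ q.2) * (v q.1 - v q.2) / K q ≤ G q := fun q =>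
    calc _ ≤ (1 / 4 * (φ q.1 - φ q.2) ^ 2 + (u q.1 - u q.2) ^ 2) / K q := by
          refine div_le_div_of_nonneg_right ?_ (by positivity)
          nlinarith [hvu q.1 q.2, sq_nonneg ((φ q.1 - φ q.2) / 2 - (v q.1 - v q.2))]
      _ = G q := by ring
  have hint : ∫ q, (φ q.1 - φ q.2) * (v q.1 - v q.2) / K q ≤ ∫ q, G q := by
    by_cases hF : Integrable fun q => (φ q.1 - φ q.2) * (v q.1 - v q.2) / K q
    · exact integral_mono hF hG hyoung
    · rw [integral_undef hF]
      exact integral_nonneg fun q => by positivity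
  have hC : 0 ≤ fracC s / 2 := div_nonneg fracC_nonneg zero_le_two
  calc Es s φ v ≤ fracC s / 2 * ∫ q, G q := mul_le_mul_of_nonneg_left hint hC
    _ = Es s u u + 1 / 4 * Es s φ φ := by
      rw [integral_add (hφ.const_mul _) hu, integral_const_mul, Es_self, Es_self]
      ring

theorem memDs2_min_abs (hs₀ : 0 ≤ s) (hs₁ : s < 3 / 2) {u : R3 → ℝ} (hu : MemHs s u)
    {k : ℝ} (hk : 0 ≤ k) : MemDs2 s fun x => min |u x| k := by
  have hv : AEStronglyMeasurable fun x => min |u x| k :=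
    (continuous_abs.min continuous_const).comp_aestronglyMeasurable hu.1.1
  have hv_le : ∀ x, |min |u x| k| ≤ |u x| := fun x => by
    rw [abs_of_nonneg (le_min (abs_nonneg _) hk)]
    exact min_le_left _ _
  have hv2 : MemLp (fun x => min |u x| k) 2 := hu.1.of_le hv (Eventually.of_forall hv_le)
  have h2p : (2 : ℝ≥0∞) ≤ ENNReal.ofReal (6 / (3 - 2 * s)) := by
    have h3 : 0 < 3 - 2 * s := by linarith
    rw [← ENNReal.ofReal_ofNat, ENNReal.ofReal_le_ofReal_iff (by positivity), le_div_iff₀ h3]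
    linarith
  refine ⟨hv2.of_exponent_le_of_ae_norm_le (k := k) (Eventually.of_forall fun x => ?_)
    two_ne_zero h2p ENNReal.ofReal_ne_top, hu.2.of_sq_sub_le hv fun x y => ?_⟩
  · rw [Real.norm_of_nonneg (le_min (abs_nonneg _) hk)]
    exact min_le_right _ _
  · simpa using sq_min_abs_sub_min_abs_le (u x) (u y) k

end Energy

theorem integral_abs_pow_three_le_of_forall_integral_sq_mul_min_le {α : Type*}
    [MeasurableSpace α] {μ : Measure α} {u : α → ℝ} (hu : AEStronglyMeasurable u μ) {C : ℝ}
    (hC : 0 ≤ C) (h : ∀ k : ℕ, ∫ x, u x ^ 2 * min |u x| k ∂μ ≤ C) :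
    ∫ x, |u x| ^ 3 ∂μ ≤ C := by
  by_cases hI : Integrable (fun x => |u x| ^ 3) μ
  · refine le_of_tendsto' (tendsto_integral_of_dominated_convergence _
      (fun k => ?_) hI (fun k => Eventually.of_forall fun x => ?_)
      (Eventually.of_forall fun x => ?_)) h
    · exact ((continuous_pow 2).mul (continuous_abs.min continuous_const)).comp_aestronglyMeasurable
        hu
    · rw [Real.norm_of_nonneg (by positivity), ← sq_abs, pow_succ]
      exact mul_le_mul_of_nonneg_left (min_le_left _ _) (by positivity)
    · refine tendsto_const_nhds.congr' ?_
      filter_upwards [eventually_ge_atTop ⌈|u x|⌉₊] with n hn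
      rw [min_eq_left ((Nat.le_ceil _).trans (Nat.cast_le.2 hn)), ← sq_abs]
      ring
  · rwa [integral_undef hI]

/-- Estimate (5.3): if `φ ∈ D^{s,2}(ℝ³)` weakly solves `(-Δ)^s φ = u²` for `u ∈ H^s(ℝ³)`,
then `∫ |u|³ ≤ E_s(u,u) + (1/4)E_s(φ,φ)`. -/
theorem cube_integral_bound (s : ℝ) (hs : 3/4 < s ∧ s < 1)
    (u : R3 → ℝ) (hu : MemHs s u)
    (φ : R3 → ℝ) (hφ : MemDs2 s φ)
    (hsol : ∀ v : R3 → ℝ, MemDs2 s v → Es s φ v = ∫ x, u x ^ 2 * v x) :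
    (∫ x, |u x| ^ 3) ≤ Es s u u + (1/4) * Es s φ φ := by
  refine integral_abs_pow_three_le_of_forall_integral_sq_mul_min_le hu.1.1
    (add_nonneg (Es_self_nonneg u) (mul_nonneg (by norm_num) (Es_self_nonneg φ))) fun k => ?_
  rw [← hsol _ (memDs2_min_abs (by linarith) (by linarith) hu k.cast_nonneg)]
  exact Es_le_of_sq_sub_le hφ.2 hu.2 fun x y => sq_min_abs_sub_min_abs_le (u x) (u y) k

end
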